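/- Let p ≥ 5 be a prime, e ≥ 1 an integer, and A, B ∈ ℤ. Let x₀, y₀ ∈ ℤ/pℤ satisfy y₀² = x₀³ + A·x₀ + B and assume the point is nonsingular, i.e. it is not the case that both 3·x₀² + A = 0 and 2·y₀ = 0 in ℤ/pℤ. Then the number of pairs (X, Y) ∈ (ℤ/p^eℤ)² with Y² = X³ + A·X + B in ℤ/p^eℤ and with X ≡ x₀ and Y ≡ y₀ under the reduction map ℤ/p^eℤ → ℤ/pℤ is exactly p^(e−1). -/

import Mathlib

/-!
`ℤ/p^eℤ` is an Artinian local ring, hence Henselian. At a nonsingular point one of the partial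
derivatives `2y₀`, `3x₀² + A` is nonzero mod `p`, so by Hensel's lemma the corresponding
coordinate of a lift is determined uniquely by the other one, which ranges freely over the
`p^(e-1)` lifts of its reduction.
-/

open Polynomial IsLocalRing

instance IsArtinianRing.henselianLocalRing (R : Type*) [CommRing R] [IsArtinianRing R]
    [IsLocalRing R] : HenselianLocalRing R where
  is_henselian f hf a₀ h₁ h₂ := HenselianRing.is_henselian f hf a₀ h₁ (h₂.map _)

theorem ZMod.isLocalRing_prime_pow {p e : ℕ} [Fact p.Prime] (he : e ≠ 0) :
    IsLocalRing (ZMod (p ^ e)) :=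
  have : Fact (1 < p ^ e) := ⟨Nat.one_lt_pow he (Fact.out : p.Prime).one_lt⟩
  .of_surjective' (PadicInt.toZModPow e) (ZMod.ringHom_surjective _)

theorem HenselianLocalRing.existsUnique_root_lift {R K : Type*} [CommRing R]
    [HenselianLocalRing R] [Field K] {φ : R →+* K} (hφ : Function.Surjective φ)
    {f : R[X]} (hf : f.Monic) {a₀ : K} (h₁ : f.eval₂ φ a₀ = 0)
    (h₂ : f.derivative.eval₂ φ a₀ ≠ 0) :
    ∃! a : R, f.IsRoot a ∧ φ a = a₀ := by
  have mem_iff : ∀ r : R, r ∈ maximalIdeal R ↔ φ r = 0 := fun r => by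
    rw [← ker_eq_maximalIdeal φ hφ, RingHom.mem_ker]
  have isUnit_iff : ∀ r : R, IsUnit r ↔ φ r ≠ 0 := fun r => by
    rw [← notMem_maximalIdeal, mem_iff]
  obtain ⟨c, rfl⟩ := hφ a₀
  obtain ⟨a, ha, hac⟩ := HenselianLocalRing.is_henselian f hf c
    (by rwa [mem_iff, ← eval₂_at_apply]) (by rwa [isUnit_iff, ← eval₂_at_apply])
  rw [mem_iff, map_sub, sub_eq_zero] at hac
  refine ⟨a, ⟨ha, hac⟩, fun b ⟨hb, hbc⟩ => ?_⟩
  refine (eq_of_eval_eq_zero_of_not_isUnit_sub ha hb ?_ ?_).symm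
  · simp [isUnit_iff, hac, hbc]
  · rwa [isUnit_iff, ← eval₂_at_apply, hac]

theorem Nat.card_eq_card_fst_of_existsUnique {α β : Type*} {S : α × β → Prop} {P : α → Prop}
    (hS : ∀ q, S q → P q.1) (h : ∀ x, P x → ∃! y, S (x, y)) :
    Nat.card {q // S q} = Nat.card {x // P x} := by
  refine Nat.card_congr (.ofBijective (fun q => ⟨q.1.1, hS _ q.2⟩) ⟨?_, ?_⟩)
  · rintro ⟨⟨x, y⟩, hq⟩ ⟨⟨x', y'⟩, hq'⟩ hxx'
    obtain rfl : x = x' := congrArg Subtype.val hxx'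
    obtain rfl : y = y' := (h x (hS _ hq)).unique hq hq'
    rfl
  · rintro ⟨x, hx⟩
    obtain ⟨y, hy, -⟩ := h x hx
    exact ⟨⟨(x, y), hy⟩, rfl⟩

theorem Nat.card_eq_card_snd_of_existsUnique {α β : Type*} {S : α × β → Prop} {Q : β → Prop}
    (hS : ∀ q, S q → Q q.2) (h : ∀ y, Q y → ∃! x, S (x, y)) :
    Nat.card {q // S q} = Nat.card {y // Q y} := by
  rw [← Nat.card_eq_card_fst_of_existsUnique (S := fun q => S q.swap) (fun q => hS q.swap) h]
  exact Nat.card_congr ((Equiv.prodComm α β).subtypeEquiv fun _ => Iff.rfl)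

theorem AddMonoidHom.card_fiber_mul_card_of_surjective {G H : Type*} [AddGroup G] [AddGroup H]
    {f : G →+ H} (hf : Function.Surjective f) (h : H) :
    Nat.card {g // f g = h} * Nat.card H = Nat.card G := by
  obtain ⟨x, rfl⟩ := hf h
  have fiber_equiv_ker : {g // f g = f x} ≃ f.ker :=
    (Equiv.subRight x).subtypeEquiv fun g => by simp [mem_ker, sub_eq_zero]
  rw [Nat.card_congr fiber_equiv_ker, ← f.ker.card_mul_index, AddSubgroup.index_ker,
    range_eq_top.mpr hf, AddSubgroup.card_top]

section Weierstrass

variable {R K : Type*} [CommRing R] [HenselianLocalRing R] [Field K] {φ : R →+* K}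
  {a b : R} {x₀ y₀ : K}

theorem existsUnique_weierstrass_y_lift (hφ : Function.Surjective φ)
    (heq : y₀ ^ 2 = x₀ ^ 3 + φ a * x₀ + φ b) (hy₀ : 2 * y₀ ≠ 0) {x : R} (hx : φ x = x₀) :
    ∃! y : R, y ^ 2 = x ^ 3 + a * x + b ∧ φ y = y₀ := by
  have h := HenselianLocalRing.existsUnique_root_lift hφ
    (monic_X_pow_sub_C (x ^ 3 + a * x + b) two_ne_zero) (a₀ := y₀)
    (by simp [eval₂_pow, hx, heq]) (by simpa [eval₂_pow, derivative_pow, map_ofNat] using hy₀)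
  simpa [sub_eq_zero] using h

theorem existsUnique_weierstrass_x_lift (hφ : Function.Surjective φ)
    (heq : y₀ ^ 2 = x₀ ^ 3 + φ a * x₀ + φ b) (hx₀ : 3 * x₀ ^ 2 + φ a ≠ 0) {y : R}
    (hy : φ y = y₀) :
    ∃! x : R, y ^ 2 = x ^ 3 + a * x + b ∧ φ x = x₀ := by
  have hmonic : (X ^ 3 + C a * X + C (b - y ^ 2)).Monic := by monicity!
  have h := HenselianLocalRing.existsUnique_root_lift hφ hmonic (a₀ := x₀)
    (by simp [eval₂_pow, hy, heq]) (by simpa [eval₂_pow, derivative_pow, map_ofNat] using hx₀)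
  refine (existsUnique_congr fun x => and_congr_left' ?_).mp h
  simp only [IsRoot.def, eval_add, eval_pow, eval_mul, eval_X, eval_C]
  constructor <;> intro h <;> linear_combination -h

theorem card_weierstrass_lifts_mul_card (hφ : Function.Surjective φ)
    (heq : y₀ ^ 2 = x₀ ^ 3 + φ a * x₀ + φ b) (hns : ¬ (3 * x₀ ^ 2 + φ a = 0 ∧ 2 * y₀ = 0)) :
    Nat.card {q : R × R // q.2 ^ 2 = q.1 ^ 3 + a * q.1 + b ∧ φ q.1 = x₀ ∧ φ q.2 = y₀} *
      Nat.card K = Nat.card R := by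
  have card_fiber := φ.toAddMonoidHom.card_fiber_mul_card_of_surjective hφ
  by_cases hy₀ : 2 * y₀ = 0
  · have hx₀ : 3 * x₀ ^ 2 + φ a ≠ 0 := fun h => hns ⟨h, hy₀⟩
    rw [Nat.card_eq_card_snd_of_existsUnique (Q := fun y => φ y = y₀) (fun q hq => hq.2.2)
      fun y hy => by simpa [hy] using existsUnique_weierstrass_x_lift hφ heq hx₀ hy]
    exact card_fiber y₀
  · rw [Nat.card_eq_card_fst_of_existsUnique (P := fun x => φ x = x₀) (fun q hq => hq.2.1)
      fun x hx => by simpa [hx] using existsUnique_weierstrass_y_lift hφ heq hy₀ hx]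
    exact card_fiber x₀

end Weierstrass

theorem card_affine_lifts_eq_pow
    {p : ℕ} (hp : p.Prime) {e : ℕ} (he : 1 ≤ e)
    (A B : ℤ) (x₀ y₀ : ZMod p)
    (heq : y₀ ^ 2 = x₀ ^ 3 + (A : ZMod p) * x₀ + (B : ZMod p))
    (hns : ¬ (3 * x₀ ^ 2 + (A : ZMod p) = 0 ∧ 2 * y₀ = 0)) :
    Nat.card {q : ZMod (p ^ e) × ZMod (p ^ e) //
        q.2 ^ 2 = q.1 ^ 3 + (A : ZMod (p ^ e)) * q.1 + (B : ZMod (p ^ e)) ∧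
        ZMod.castHom (dvd_pow_self p (by omega : e ≠ 0)) (ZMod p) q.1 = x₀ ∧
        ZMod.castHom (dvd_pow_self p (by omega : e ≠ 0)) (ZMod p) q.2 = y₀} =
      p ^ (e - 1) := by
  have he₀ : e ≠ 0 := by omega
  have := Fact.mk hp
  have := ZMod.isLocalRing_prime_pow (p := p) he₀
  have key := card_weierstrass_lifts_mul_card (ZMod.castHom_surjective (dvd_pow_self p he₀))
    (a := (A : ZMod (p ^ e))) (b := B) (by simpa using heq) (by simpa using hns)
  rw [Nat.card_zmod, Nat.card_zmod] at key
  apply Nat.eq_of_mul_eq_mul_right hp.pos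
  rw [key, pow_sub_one_mul he₀]
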